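/- Let G be a graph with at least one edge and W a non-negative symmetric weight matrix supported on G (i.e., w_{ij} = 0 whenever i ≠ j and ij is not an edge) with W not diagonal. Then 1 + (Σ_{i≠j} w_{ij})/(tr(W) − n·λ_min(W)) ≤ χ_v(G), where λ_min(W) is the smallest eigenvalue of W. -/

import Mathlib

open Matrix Finset
open scoped Kronecker Classical

/-- Largest eigenvalue (spectral supremum) of a real matrix. -/
noncomputable def lamMax {n : ℕ} (M : Matrix (Fin n) (Fin n) ℝ) : ℝ := sSup (spectrum ℝ M)

/-- Smallest eigenvalue (spectral infimum) of a real matrix. -/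
noncomputable def lamMin {n : ℕ} (M : Matrix (Fin n) (Fin n) ℝ) : ℝ := sInf (spectrum ℝ M)

/-- Diagonal matrix of vertex degrees. -/
noncomputable def degMatrix {n : ℕ} (G : SimpleGraph (Fin n)) : Matrix (Fin n) (Fin n) ℝ :=
  Matrix.diagonal fun i => (G.degree i : ℝ)

/-- The vector chromatic number: the smallest real `k ≥ 2` such that there exist unit
vectors `u i` with `⟪u i, u j⟫ ≤ -1/(k-1)` for all edges `ij`. -/
noncomputable def vecChromNum {V : Type*} [Fintype V] (G : SimpleGraph V) : ℝ :=
  sInf {k : ℝ | 2 ≤ k ∧ ∃ u : V → EuclideanSpace ℝ V,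
    (∀ i, ‖u i‖ = 1) ∧ ∀ i j, G.Adj i j → (inner ℝ (u i) (u j) : ℝ) ≤ -(1/(k-1))}

/-!
If unit vectors `u i` witness `χ_v(G) ≤ k`, their Gram matrix and `W - λ_min(W) • 1` are both
positive semidefinite, so by the Schur product theorem the sum of the entries of their Hadamard
product is non-negative. The diagonal contributes `tr W - n λ_min(W)`; off the diagonal `W` is
non-negative and supported on edges, where `⟪u i, u j⟫ ≤ -1/(k-1)`, so the rest is at most
`-(∑_{i≠j} w_{ij})/(k-1)`. This is Galtman's bound for `B ∝ W - λ_min(W) • 1`.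
-/

open scoped RealInnerProductSpace

lemma inner_single_sub_smul_ones {ι : Type*} [Fintype ι] [DecidableEq ι] (c : ℝ) (i j : ι) :
    ⟪EuclideanSpace.single i (1 : ℝ) - c • WithLp.toLp 2 (fun _ => (1 : ℝ)),
      EuclideanSpace.single j (1 : ℝ) - c • WithLp.toLp 2 (fun _ => (1 : ℝ))⟫ =
      (if i = j then 1 else 0) - 2 * c + c ^ 2 * Fintype.card ι := by
  simp only [inner_sub_left, inner_sub_right, inner_smul_left, inner_smul_right,
    PiLp.inner_apply, PiLp.single_apply, RCLike.inner_apply, conj_trivial, mul_ite, mul_one,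
    mul_zero, eq_comm, sum_ite_eq, mem_univ, ↓reduceIte, sum_const, card_univ, nsmul_eq_mul]
  ring

theorem exists_regular_simplex {ι : Type*} [Fintype ι] (hι : 2 ≤ Fintype.card ι) :
    ∃ u : ι → EuclideanSpace ℝ ι, ∀ i j,
      ⟪u i, u j⟫ = if i = j then 1 else -(1 / ((Fintype.card ι : ℝ) - 1)) := by
  set m : ℝ := (Fintype.card ι : ℝ) with hm_def
  have hm : 2 ≤ m := by rw [hm_def]; exact_mod_cast hι
  refine ⟨fun i => √(m / (m - 1)) • (EuclideanSpace.single i (1 : ℝ) -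
    (1 / m) • WithLp.toLp 2 (fun _ => (1 : ℝ))), fun i j => ?_⟩
  rw [inner_smul_left, inner_smul_right, inner_single_sub_smul_ones, ← hm_def]
  have hs : √(m / (m - 1)) * √(m / (m - 1)) = m / (m - 1) :=
    Real.mul_self_sqrt (div_nonneg (by linarith) (by linarith))
  have hm0 : m ≠ 0 := by positivity
  have hm1 : m - 1 ≠ 0 := by linarith
  simp only [conj_trivial, ← mul_assoc, hs]
  split_ifs <;> field_simp <;> ring

lemma vecChromNum_feasible_nonempty {V : Type*} [Fintype V] (G : SimpleGraph V) :
    {k : ℝ | 2 ≤ k ∧ ∃ u : V → EuclideanSpace ℝ V,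
      (∀ i, ‖u i‖ = 1) ∧ ∀ i j, G.Adj i j → ⟪u i, u j⟫ ≤ -(1 / (k - 1))}.Nonempty := by
  by_cases hV : 2 ≤ Fintype.card V
  · obtain ⟨u, hu⟩ := exists_regular_simplex hV
    refine ⟨Fintype.card V, by exact_mod_cast hV, u, fun i => ?_, fun i j hij => ?_⟩
    · rw [norm_eq_sqrt_real_inner, hu i i, if_pos rfl, Real.sqrt_one]
    · rw [hu i j, if_neg hij.ne]
  · have : Subsingleton V := Fintype.card_le_one_iff_subsingleton.mp (by omega)
    exact ⟨2, le_rfl, fun i => EuclideanSpace.single i 1, fun i => by simp,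
      fun i j hij => absurd (Subsingleton.elim i j) hij.ne⟩

lemma le_vecChromNum {V : Type*} [Fintype V] {G : SimpleGraph V} {x : ℝ}
    (h : ∀ k, 2 ≤ k → ∀ u : V → EuclideanSpace ℝ V, (∀ i, ‖u i‖ = 1) →
      (∀ i j, G.Adj i j → ⟪u i, u j⟫ ≤ -(1 / (k - 1))) → x ≤ k) :
    x ≤ vecChromNum G :=
  le_csInf (vecChromNum_feasible_nonempty G) fun k ⟨hk, u, hu, hadj⟩ => h k hk u hu hadj

lemma Matrix.PosSemidef.sum_hadamard_nonneg {ι : Type*} [Fintype ι] {A B : Matrix ι ι ℝ}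
    (hA : A.PosSemidef) (hB : B.PosSemidef) : 0 ≤ ∑ i, ∑ j, A i j * B i j := by
  simpa [dotProduct, mulVec] using (hA.hadamard hB).dotProduct_mulVec_nonneg 1

lemma Matrix.IsHermitian.posSemidef_sub_smul_one {ι : Type*} [Fintype ι] [DecidableEq ι]
    {A : Matrix ι ι ℝ} (hA : A.IsHermitian) {c : ℝ} (hc : ∀ x ∈ spectrum ℝ A, c ≤ x) :
    (A - c • 1).PosSemidef := by
  open scoped MatrixOrder in
  simpa [Algebra.algebraMap_eq_smul_one, Matrix.le_iff] using
    algebraMap_le_of_le_spectrum (A := Matrix ι ι ℝ) hc hA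

lemma lamMin_le_of_mem_spectrum {n : ℕ} (M : Matrix (Fin n) (Fin n) ℝ) {x : ℝ}
    (hx : x ∈ spectrum ℝ M) : lamMin M ≤ x :=
  csInf_le M.finite_spectrum.bddBelow hx

lemma Matrix.IsSymm.posSemidef_sub_lamMin_smul_one {n : ℕ} {W : Matrix (Fin n) (Fin n) ℝ}
    (hW : W.IsSymm) : (W - lamMin W • 1).PosSemidef :=
  (isHermitian_iff_isSymm.mpr hW).posSemidef_sub_smul_one fun _ => lamMin_le_of_mem_spectrum W

lemma sum_sum_eq_sum_add_sum_offDiag {ι M : Type*} [Fintype ι] [DecidableEq ι]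
    [AddCommMonoid M] (f : ι → ι → M) :
    ∑ i, ∑ j, f i j = ∑ i, f i i + ∑ p ∈ univ.offDiag, f p.1 p.2 := by
  rw [← sum_product', ← diag_union_offDiag, sum_union (disjoint_diag_offDiag _), sum_diag]

section WeightedGraph

variable {V E : Type*} [Fintype V] [NormedAddCommGroup E] [InnerProductSpace ℝ E]
  {G : SimpleGraph V} {W : Matrix V V ℝ}

lemma sum_offDiag_mul_inner_le (hW0 : ∀ i j, 0 ≤ W i j)
    (hsupp : ∀ i j, i ≠ j → ¬G.Adj i j → W i j = 0) {u : V → E} {t : ℝ}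
    (hadj : ∀ i j, G.Adj i j → ⟪u i, u j⟫ ≤ t) :
    ∑ p ∈ univ.offDiag, W p.1 p.2 * ⟪u p.1, u p.2⟫ ≤ (∑ p ∈ univ.offDiag, W p.1 p.2) * t := by
  rw [sum_mul]
  refine sum_le_sum fun p hp => ?_
  by_cases hG : G.Adj p.1 p.2
  · exact mul_le_mul_of_nonneg_left (hadj _ _ hG) (hW0 _ _)
  · simp [hsupp _ _ (mem_offDiag.mp hp).2.2 hG]

theorem sum_offDiag_div_le_trace_sub_card_mul [DecidableEq V] {c : ℝ}
    (hWc : (W - c • 1).PosSemidef) (hW0 : ∀ i j, 0 ≤ W i j)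
    (hsupp : ∀ i j, i ≠ j → ¬G.Adj i j → W i j = 0) {k : ℝ} {u : V → E} (hu : ∀ i, ‖u i‖ = 1)
    (hadj : ∀ i j, G.Adj i j → ⟪u i, u j⟫ ≤ -(1 / (k - 1))) :
    (∑ p ∈ univ.offDiag, W p.1 p.2) / (k - 1) ≤ W.trace - Fintype.card V * c := by
  have hpair := hWc.sum_hadamard_nonneg (posSemidef_gram ℝ u)
  have hdiag : ∑ i, (W - c • 1) i i * gram ℝ u i i = W.trace - Fintype.card V * c := by
    simp [gram_apply, hu, Matrix.trace, sum_sub_distrib]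
  have hoff : ∑ p ∈ univ.offDiag, (W - c • 1) p.1 p.2 * gram ℝ u p.1 p.2 =
      ∑ p ∈ univ.offDiag, W p.1 p.2 * ⟪u p.1, u p.2⟫ :=
    sum_congr rfl fun p hp => by simp [gram_apply, one_apply_ne (mem_offDiag.mp hp).2.2]
  rw [sum_sum_eq_sum_add_sum_offDiag, hdiag, hoff] at hpair
  have := sum_offDiag_mul_inner_le hW0 hsupp hadj
  rw [div_eq_mul_one_div]
  linarith

end WeightedGraph

theorem weighted_lima_bound_vector_chromatic_number_general {n : ℕ} (G : SimpleGraph (Fin n))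
    (W : Matrix (Fin n) (Fin n) ℝ)
    (hW0 : ∀ i j, 0 ≤ W i j) (hWsymm : W.IsSymm)
    (hsupp : ∀ i j, i ≠ j → ¬G.Adj i j → W i j = 0) :
    1 + (∑ p ∈ Finset.univ.offDiag, W p.1 p.2) / (W.trace - (n : ℝ) * lamMin W) ≤
      vecChromNum G := by
  refine le_vecChromNum fun k hk u hu hadj => ?_
  have hk1 : 0 < k - 1 := by linarith
  have hN : 0 ≤ ∑ p ∈ univ.offDiag, W p.1 p.2 := sum_nonneg fun p _ => hW0 p.1 p.2
  have key := sum_offDiag_div_le_trace_sub_card_mul hWsymm.posSemidef_sub_lamMin_smul_one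
    hW0 hsupp hu hadj
  rw [Fintype.card_fin] at key
  have hd : 0 ≤ W.trace - n * lamMin W := (div_nonneg hN hk1.le).trans key
  have hNd : ∑ p ∈ univ.offDiag, W p.1 p.2 ≤ (k - 1) * (W.trace - n * lamMin W) := by
    rwa [div_le_iff₀ hk1, mul_comm] at key
  linarith [div_le_of_le_mul₀ hd hk1.le hNd]

/-- Weighted Lima-type bound: for a non-negative symmetric weight matrix `W` supported on the
graph `G` (and not diagonal), `1 + (∑_{i≠j} w i j)/(tr W - n·lamMin W) ≤ chi_v(G)`. -/
theorem weighted_lima_bound_vector_chromatic_number {n : ℕ} (G : SimpleGraph (Fin n))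
    (he : G.edgeFinset.Nonempty) (W : Matrix (Fin n) (Fin n) ℝ)
    (hW0 : ∀ i j, 0 ≤ W i j) (hWsymm : W.IsSymm)
    (hsupp : ∀ i j, i ≠ j → ¬G.Adj i j → W i j = 0)
    (hnotdiag : ∃ i j, i ≠ j ∧ W i j ≠ 0) :
    1 + (∑ p ∈ Finset.univ.offDiag, W p.1 p.2) / (W.trace - (n : ℝ) * lamMin W) ≤
      vecChromNum G :=
  weighted_lima_bound_vector_chromatic_number_general G W hW0 hWsymm hsupp
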